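/- Multiclass extension: let f : ℝⁿ → ℝ^k be given by f(x) = B·max(Ax,0) with A ∈ ℝ^{p×n}, B ∈ ℝ^{k×p}. For any pair of distinct classes i ≠ j, define the zonotopes Z_{ij} = Σ_{m=1}^p [(B⁺(i,m)+B⁻(j,m))·A⁺(m,:)ᵀ, (B⁺(i,m)+B⁻(j,m))·A⁻(m,:)ᵀ] + {(A⁻)ᵀ(B⁻(i,:)+B⁺(j,:))ᵀ} and Z_{ji} defined with the roles of i and j swapped. Then for every x ∈ ℝⁿ, f_i(x) − f_j(x) = sup_{z ∈ Z_{ij}} ⟨z, x⟩ − sup_{z ∈ Z_{ji}} ⟨z, x⟩, so the decision boundary between classes i and j is the set where the support functions of Z_{ij} and Z_{ji} coincide. -/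

import Mathlib

open Matrix Finset Pointwise

/-- Entrywise positive part of a matrix. -/
noncomputable def matPos {p n : ℕ} (M : Matrix (Fin p) (Fin n) ℝ) : Matrix (Fin p) (Fin n) ℝ :=
  fun i j => max (M i j) 0

/-- Entrywise negative part of a matrix. -/
noncomputable def matNeg {p n : ℕ} (M : Matrix (Fin p) (Fin n) ℝ) : Matrix (Fin p) (Fin n) ℝ :=
  fun i j => max (-(M i j)) 0

/-- Output `i` of the bias-free network `f(x) = B max(Ax, 0)`. -/
noncomputable def netOut {p n k : ℕ} (A : Matrix (Fin p) (Fin n) ℝ)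
    (B : Matrix (Fin k) (Fin p) ℝ) (i : Fin k) (x : Fin n → ℝ) : ℝ :=
  ∑ m, B i m * max (A m ⬝ᵥ x) 0

/-- The zonotope `Z_{ij}`: Minkowski sum of the line segments
`[(B⁺(i,m)+B⁻(j,m))·A⁺(m,:), (B⁺(i,m)+B⁻(j,m))·A⁻(m,:)]` shifted by
`(A⁻)ᵀ (B⁻(i,:)+B⁺(j,:))ᵀ`. -/
noncomputable def zono {p n k : ℕ} (A : Matrix (Fin p) (Fin n) ℝ)
    (B : Matrix (Fin k) (Fin p) ℝ) (i j : Fin k) : Set (Fin n → ℝ) :=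
  (∑ m : Fin p,
      segment ℝ ((matPos B i m + matNeg B j m) • matPos A m)
        ((matPos B i m + matNeg B j m) • matNeg A m))
    + ({fun t => ∑ m, matNeg A m t * (matNeg B i m + matPos B j m)} : Set (Fin n → ℝ))

/-!
A linear functional attains its maximum over a segment `[a, b]` at an endpoint, and maxima add
up over Minkowski sums, so the support function of `Z_{ij}` at `x` is
`∑ₘ cₘ max(⟨A⁺ₘ, x⟩, ⟨A⁻ₘ, x⟩) + dₘ ⟨A⁻ₘ, x⟩` with `cₘ = B⁺(i,m) + B⁻(j,m)` and
`dₘ = B⁻(i,m) + B⁺(j,m)`. For `Z_{ji}` the roles of `c` and `d` are swapped, so the difference is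
`∑ₘ (cₘ - dₘ) (max(⟨A⁺ₘ, x⟩, ⟨A⁻ₘ, x⟩) - ⟨A⁻ₘ, x⟩) = ∑ₘ (B(i,m) - B(j,m)) max(⟨Aₘ, x⟩, 0)`.
-/

section IsGreatest

variable {α : Type*} [AddCommMonoid α] [PartialOrder α] [IsOrderedAddMonoid α]

theorem IsGreatest.add {s t : Set α} {a b : α} (ha : IsGreatest s a) (hb : IsGreatest t b) :
    IsGreatest (s + t) (a + b) :=
  ⟨Set.add_mem_add ha.1 hb.1, add_mem_upperBounds_add ha.2 hb.2⟩

theorem IsGreatest.finsetSum {ι : Type*} {u : Finset ι} {s : ι → Set α} {a : ι → α}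
    (h : ∀ m ∈ u, IsGreatest (s m) (a m)) : IsGreatest (∑ m ∈ u, s m) (∑ m ∈ u, a m) := by
  classical
  induction u using Finset.induction_on with
  | empty => exact isGreatest_singleton
  | insert m u hm ih =>
    rw [sum_insert hm, sum_insert hm]
    exact (h m (mem_insert_self m u)).add (ih fun m' hm' => h m' (mem_insert_of_mem hm'))

end IsGreatest

theorem isGreatest_image_segment {𝕜 E : Type*} [Field 𝕜] [LinearOrder 𝕜] [IsStrictOrderedRing 𝕜]
    [AddCommGroup E] [Module 𝕜 E] (ℓ : E →ₗ[𝕜] 𝕜) (a b : E) :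
    IsGreatest (ℓ '' segment 𝕜 a b) (max (ℓ a) (ℓ b)) := by
  rw [← LinearMap.coe_toAffineMap, image_segment, segment_eq_uIcc]
  exact isGreatest_Icc inf_le_sup

theorem csSup_image_sum_segment_add_singleton {ι E : Type*} [AddCommGroup E] [Module ℝ E]
    (ℓ : E →ₗ[ℝ] ℝ) (u : Finset ι) (a b : ι → E) (c : E) :
    sSup (ℓ '' (∑ m ∈ u, segment ℝ (a m) (b m) + {c}))
      = ∑ m ∈ u, max (ℓ (a m)) (ℓ (b m)) + ℓ c := by
  rw [Set.image_add, Set.image_finsetSum, Set.image_singleton]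
  exact ((IsGreatest.finsetSum fun m _ => isGreatest_image_segment ℓ (a m) (b m)).add
    isGreatest_singleton).csSup_eq

section Zonotope

variable {p n k : ℕ} (A : Matrix (Fin p) (Fin n) ℝ) (B : Matrix (Fin k) (Fin p) ℝ)

theorem matPos_apply_sub_matNeg_apply (a : Fin p) (b : Fin n) :
    matPos A a b - matNeg A a b = A a b :=
  max_zero_sub_max_neg_zero_eq_self (A a b)

theorem matPos_sub_matNeg : matPos A - matNeg A = A :=
  funext₂ (matPos_apply_sub_matNeg_apply A)

theorem max_dotProduct_matPos_matNeg_sub (m : Fin p) (x : Fin n → ℝ) :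
    max (matPos A m ⬝ᵥ x) (matNeg A m ⬝ᵥ x) - matNeg A m ⬝ᵥ x = max (A m ⬝ᵥ x) 0 := by
  have hrow : matPos A m - matNeg A m = A m := congrFun (matPos_sub_matNeg A) m
  rw [← max_sub_sub_right, sub_self, ← sub_dotProduct, hrow]

theorem csSup_dotProduct_image_zono (i j : Fin k) (x : Fin n → ℝ) :
    sSup ((· ⬝ᵥ x) '' zono A B i j)
      = ∑ m, ((matPos B i m + matNeg B j m) * max (matPos A m ⬝ᵥ x) (matNeg A m ⬝ᵥ x)
          + (matNeg B i m + matPos B j m) * (matNeg A m ⬝ᵥ x)) := by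
  set c : Fin p → ℝ := fun m => matPos B i m + matNeg B j m
  set d : Fin p → ℝ := fun m => matNeg B i m + matPos B j m
  have hc : ∀ m, 0 ≤ c m := fun m => add_nonneg (le_max_right _ _) (le_max_right _ _)
  have hshift : ((matNeg A)ᵀ *ᵥ d) ⬝ᵥ x = ∑ m, d m * (matNeg A m ⬝ᵥ x) := by
    rw [mulVec_transpose, ← dotProduct_mulVec]
    rfl
  have hsup := csSup_image_sum_segment_add_singleton ((dotProductBilin ℝ ℝ).flip x) univ
    (fun m => c m • matPos A m) (fun m => c m • matNeg A m) ((matNeg A)ᵀ *ᵥ d)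
  simp only [LinearMap.flip_apply, dotProductBilin_apply_apply, smul_dotProduct, smul_eq_mul,
    ← mul_max_of_nonneg _ _ (hc _), hshift] at hsup
  rw [sum_add_distrib, ← hsup]
  rfl

theorem netOut_sub_netOut (i j : Fin k) (x : Fin n → ℝ) :
    netOut A B i x - netOut A B j x = ∑ m, (B i m - B j m) * max (A m ⬝ᵥ x) 0 := by
  simp only [netOut, ← sum_sub_distrib, sub_mul]

end Zonotope

theorem multiclass_decision_boundary_support_functions_general {p n k : ℕ}
    (A : Matrix (Fin p) (Fin n) ℝ) (B : Matrix (Fin k) (Fin p) ℝ)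
    (i j : Fin k) (x : Fin n → ℝ) :
    netOut A B i x - netOut A B j x
      = sSup ((fun z => z ⬝ᵥ x) '' zono A B i j) - sSup ((fun z => z ⬝ᵥ x) '' zono A B j i) := by
  rw [netOut_sub_netOut, csSup_dotProduct_image_zono, csSup_dotProduct_image_zono,
    ← sum_sub_distrib]
  refine sum_congr rfl fun m _ => ?_
  have hB : matPos B i m + matNeg B j m - (matNeg B i m + matPos B j m) = B i m - B j m := by
    linear_combination matPos_apply_sub_matNeg_apply B i m - matPos_apply_sub_matNeg_apply B j m
  linear_combination
    -(max (matPos A m ⬝ᵥ x) (matNeg A m ⬝ᵥ x) - matNeg A m ⬝ᵥ x) * hB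
      - (B i m - B j m) * max_dotProduct_matPos_matNeg_sub A m x

/-- Multiclass extension: for a `k`-class network `f(x) = B max(Ax, 0)` and any two distinct
classes `i ≠ j`, the difference `f_i(x) − f_j(x)` is the difference of the support functions of
the zonotopes `Z_{ij}` and `Z_{ji}`, so the decision boundary between classes `i` and `j` is the
set where the two support functions coincide. -/
theorem multiclass_decision_boundary_support_functions {p n k : ℕ}
    (A : Matrix (Fin p) (Fin n) ℝ) (B : Matrix (Fin k) (Fin p) ℝ)
    (i j : Fin k) (hij : i ≠ j) (x : Fin n → ℝ) :
    netOut A B i x - netOut A B j x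
      = sSup ((fun z => z ⬝ᵥ x) '' zono A B i j) - sSup ((fun z => z ⬝ᵥ x) '' zono A B j i) :=
  multiclass_decision_boundary_support_functions_general A B i j x
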